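/- Let B be a bicategory, A a separable Frobenius algebra on an object a, X : a → b a right A-module with action ρ_X, and Y : c → a a left A-module with action ρ_Y. Let π := (ρ_X ⊗ ρ_Y) ∘ (1_X ⊗ (Δ ∘ η) ⊗ 1_Y) : X ⊗ Y → X ⊗ Y and let r := ρ_X ⊗ 1_Y and l := 1_X ⊗ ρ_Y be the parallel pair X ⊗ A ⊗ Y → X ⊗ Y. Suppose π splits: there are a 1-morphism T : c → b and 2-morphisms ϑ : X ⊗ Y → T and ξ : T → X ⊗ Y with ϑ ∘ ξ = 1_T and ξ ∘ ϑ = π. Then ϑ is a coequalizer of (l, r) in the hom-category B(c,b): ϑ ∘ l = ϑ ∘ r, and for every 2-morphism φ : X ⊗ Y → Z with φ ∘ l = φ ∘ r there exists a unique ζ : T → Z with ζ ∘ ϑ = φ. (Thus the tensor product X ⊗_A Y exists and is the image of the idempotent π.) -/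
import Mathlib


/-!
A splitting of the canonical idempotent π on X ⊗ Y realizes the tensor product
X ⊗_A Y as a coequalizer.

Conventions: the paper's horizontal composite `F ⊗ G` (first `G`, then `F`) is
Mathlib's `G ≫ F`.  A right `A`-module `X : a → b` has its action
`X ⊗ A → X` given by `actX : A ≫ X ⟶ X`; a left `A`-module `Y : c → a` has its
action `A ⊗ Y → Y` given by `actY : Y ≫ A ⟶ Y`; the paper's `X ⊗ Y : c → b`
is `Y ≫ X`.  All coherence isomorphisms suppressed in the paper are inserted
explicitly.
-/

open CategoryTheory Bicategory

universe w v u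

/-- A Frobenius algebra on an object `a` of a bicategory. -/
structure Frob {C : Type u} [Bicategory.{w, v} C] (a : C) where
  A : a ⟶ a
  mul : A ≫ A ⟶ A
  one : 𝟙 a ⟶ A
  comul : A ⟶ A ≫ A
  counit : A ⟶ 𝟙 a
  mul_assoc : (α_ A A A).hom ≫ A ◁ mul ≫ mul = mul ▷ A ≫ mul
  mul_one : (ρ_ A).inv ≫ A ◁ one ≫ mul = 𝟙 A
  one_mul : (λ_ A).inv ≫ one ▷ A ≫ mul = 𝟙 A
  comul_coassoc : comul ≫ A ◁ comul = comul ≫ comul ▷ A ≫ (α_ A A A).hom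
  comul_counit : comul ≫ A ◁ counit ≫ (ρ_ A).hom = 𝟙 A
  counit_comul : comul ≫ counit ▷ A ≫ (λ_ A).hom = 𝟙 A
  frob_left : A ◁ comul ≫ (α_ A A A).inv ≫ mul ▷ A = mul ≫ comul
  frob_right : comul ▷ A ≫ (α_ A A A).hom ≫ A ◁ mul = mul ≫ comul

variable {C : Type u} [Bicategory.{w, v} C]

/-- A right `A`-module structure on `X : a ⟶ b`. -/
def IsRightModule {a b : C} (F : Frob a) (X : a ⟶ b) (act : F.A ≫ X ⟶ X) : Prop :=
  ((α_ F.A F.A X).hom ≫ F.A ◁ act ≫ act = F.mul ▷ X ≫ act) ∧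
  ((λ_ X).inv ≫ F.one ▷ X ≫ act = 𝟙 X)

/-- A left `A`-module structure on `Y : c ⟶ a`. -/
def IsLeftModule {a c : C} (F : Frob a) (Y : c ⟶ a) (act : Y ≫ F.A ⟶ Y) : Prop :=
  ((α_ Y F.A F.A).hom ≫ Y ◁ F.mul ≫ act = act ▷ F.A ≫ act) ∧
  ((ρ_ Y).inv ≫ Y ◁ F.one ≫ act = 𝟙 Y)

/-- The idempotent `π := (ρ_X ⊗ ρ_Y) ∘ (1_X ⊗ (Δ ∘ η) ⊗ 1_Y) : X ⊗ Y → X ⊗ Y`. -/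
def piT {a b c : C} (F : Frob a) {X : a ⟶ b} {Y : c ⟶ a}
    (actX : F.A ≫ X ⟶ X) (actY : Y ≫ F.A ⟶ Y) : Y ≫ X ⟶ Y ≫ X :=
  (ρ_ Y).inv ▷ X ≫ (Y ◁ (F.one ≫ F.comul)) ▷ X ≫ (α_ Y F.A F.A).inv ▷ X ≫
    (α_ (Y ≫ F.A) F.A X).hom ≫ actY ▷ (F.A ≫ X) ≫ Y ◁ actX

/-- `r := ρ_X ⊗ 1_Y : X ⊗ A ⊗ Y → X ⊗ Y`. -/
def rPair {a b c : C} (F : Frob a) {X : a ⟶ b} {Y : c ⟶ a}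
    (actX : F.A ≫ X ⟶ X) : Y ≫ F.A ≫ X ⟶ Y ≫ X :=
  Y ◁ actX

/-- `l := 1_X ⊗ ρ_Y : X ⊗ A ⊗ Y → X ⊗ Y`. -/
def lPair {a b c : C} (F : Frob a) {X : a ⟶ b} {Y : c ⟶ a}
    (actY : Y ≫ F.A ⟶ Y) : Y ≫ F.A ≫ X ⟶ Y ≫ X :=
  (α_ Y F.A X).inv ≫ actY ▷ X

section Aux

variable {a b c : C} (F : Frob a) {X : a ⟶ b} {Y : c ⟶ a}

/-- Algebra identity: inserting `η ≫ Δ` on the left and multiplying is `Δ`. -/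
lemma lemA : (λ_ F.A).inv ≫ (F.one ≫ F.comul) ▷ F.A ≫ (α_ F.A F.A F.A).hom ≫ F.A ◁ F.mul
    = F.comul := by
  simp only [comp_whiskerRight, Category.assoc]
  rw [F.frob_right, reassoc_of% F.one_mul]

/-- Algebra identity: inserting `η ≫ Δ` on the right and multiplying is `Δ`. -/
lemma lemB : (ρ_ F.A).inv ≫ F.A ◁ (F.one ≫ F.comul) ≫ (α_ F.A F.A F.A).inv ≫ F.mul ▷ F.A
    = F.comul := by
  simp only [Bicategory.whiskerLeft_comp, Category.assoc]
  rw [F.frob_left, reassoc_of% F.mul_one]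

/-- The 2-morphism `Y ⟶ Y ≫ A` that inserts `η ≫ Δ` and acts on `Y` with the first leg. -/
def uIns (actY : Y ≫ F.A ⟶ Y) : Y ⟶ Y ≫ F.A :=
  (ρ_ Y).inv ≫ Y ◁ (F.one ≫ F.comul) ≫ (α_ Y F.A F.A).inv ≫ actY ▷ F.A

/-- The common value of `l ≫ π` and `r ≫ π`: comultiply the incoming `A` and act
on both sides. -/
def midT (actX : F.A ≫ X ⟶ X) (actY : Y ≫ F.A ⟶ Y) : Y ≫ F.A ≫ X ⟶ Y ≫ X :=
  Y ◁ (F.comul ▷ X) ≫ Y ◁ (α_ F.A F.A X).hom ≫ (α_ Y F.A (F.A ≫ X)).inv ≫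
    actY ▷ (F.A ≫ X) ≫ Y ◁ actX

lemma piT_eq (actX : F.A ≫ X ⟶ X) (actY : Y ≫ F.A ⟶ Y) :
    piT F actX actY = uIns F actY ▷ X ≫ (α_ Y F.A X).hom ≫ Y ◁ actX := by
  unfold piT uIns
  bicategory

lemma uIns_mul (actY : Y ≫ F.A ⟶ Y) :
    uIns F actY ▷ F.A ≫ (α_ Y F.A F.A).hom ≫ Y ◁ F.mul
      = Y ◁ F.comul ≫ (α_ Y F.A F.A).inv ≫ actY ▷ F.A := by
  unfold uIns
  calc ((ρ_ Y).inv ≫ Y ◁ (F.one ≫ F.comul) ≫ (α_ Y F.A F.A).inv ≫ actY ▷ F.A) ▷ F.A ≫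
        (α_ Y F.A F.A).hom ≫ Y ◁ F.mul
      = ((ρ_ Y).inv ≫ Y ◁ (F.one ≫ F.comul) ≫ (α_ Y F.A F.A).inv) ▷ F.A ≫
          (α_ (Y ≫ F.A) F.A F.A).hom ≫ (actY ▷ (F.A ≫ F.A) ≫ Y ◁ F.mul) := by
        bicategory
    _ = ((ρ_ Y).inv ≫ Y ◁ (F.one ≫ F.comul) ≫ (α_ Y F.A F.A).inv) ▷ F.A ≫
          (α_ (Y ≫ F.A) F.A F.A).hom ≫ ((Y ≫ F.A) ◁ F.mul ≫ actY ▷ F.A) := by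
        rw [← whisker_exchange]
    _ = Y ◁ ((λ_ F.A).inv ≫ (F.one ≫ F.comul) ▷ F.A ≫ (α_ F.A F.A F.A).hom ≫ F.A ◁ F.mul) ≫
          (α_ Y F.A F.A).inv ≫ actY ▷ F.A := by
        bicategory
    _ = Y ◁ F.comul ≫ (α_ Y F.A F.A).inv ≫ actY ▷ F.A := by rw [lemA]

lemma subr (actX : F.A ≫ X ⟶ X) (actY : Y ≫ F.A ⟶ Y)
    (hX1 : (α_ F.A F.A X).hom ≫ F.A ◁ actX ≫ actX = F.mul ▷ X ≫ actX) :
    rPair F actX ≫ piT F actX actY = midT F actX actY := by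
  have hX1' : F.A ◁ actX ≫ actX = (α_ F.A F.A X).inv ≫ F.mul ▷ X ≫ actX := by
    rw [← hX1, Iso.inv_hom_id_assoc]
  calc rPair F actX ≫ piT F actX actY
      = uIns F actY ▷ (F.A ≫ X) ≫ (α_ Y F.A (F.A ≫ X)).hom ≫
          Y ◁ (F.A ◁ actX ≫ actX) := by
        rw [piT_eq]; unfold rPair
        slice_lhs 1 2 => rw [whisker_exchange]
        bicategory
    _ = uIns F actY ▷ (F.A ≫ X) ≫ (α_ Y F.A (F.A ≫ X)).hom ≫
          Y ◁ ((α_ F.A F.A X).inv ≫ F.mul ▷ X ≫ actX) := by rw [hX1']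
    _ = (α_ Y F.A X).inv ≫
          ((uIns F actY ▷ F.A ≫ (α_ Y F.A F.A).hom ≫ Y ◁ F.mul) ▷ X) ≫
          (α_ Y F.A X).hom ≫ Y ◁ actX := by
        bicategory
    _ = (α_ Y F.A X).inv ≫
          ((Y ◁ F.comul ≫ (α_ Y F.A F.A).inv ≫ actY ▷ F.A) ▷ X) ≫
          (α_ Y F.A X).hom ≫ Y ◁ actX := by rw [uIns_mul]
    _ = midT F actX actY := by unfold midT; bicategory

lemma act_ins (actY : Y ≫ F.A ⟶ Y) :
    actY ≫ (ρ_ Y).inv ≫ Y ◁ (F.one ≫ F.comul)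
      = (ρ_ (Y ≫ F.A)).inv ≫ (Y ≫ F.A) ◁ (F.one ≫ F.comul) ≫ actY ▷ (F.A ≫ F.A) := by
  rw [whisker_exchange, rightUnitor_inv_naturality_assoc]

lemma subl (actX : F.A ≫ X ⟶ X) (actY : Y ≫ F.A ⟶ Y)
    (hY1 : (α_ Y F.A F.A).hom ≫ Y ◁ F.mul ≫ actY = actY ▷ F.A ≫ actY) :
    lPair F actY ≫ piT F actX actY = midT F actX actY := by
  calc lPair F actY ≫ piT F actX actY
      = (α_ Y F.A X).inv ≫
          ((actY ≫ (ρ_ Y).inv ≫ Y ◁ (F.one ≫ F.comul)) ▷ X) ≫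
          (α_ Y F.A F.A).inv ▷ X ≫ (α_ (Y ≫ F.A) F.A X).hom ≫
          actY ▷ (F.A ≫ X) ≫ Y ◁ actX := by
        unfold lPair piT; bicategory
    _ = (α_ Y F.A X).inv ≫
          (((ρ_ (Y ≫ F.A)).inv ≫ (Y ≫ F.A) ◁ (F.one ≫ F.comul) ≫
            actY ▷ (F.A ≫ F.A)) ▷ X) ≫
          (α_ Y F.A F.A).inv ▷ X ≫ (α_ (Y ≫ F.A) F.A X).hom ≫
          actY ▷ (F.A ≫ X) ≫ Y ◁ actX := by rw [act_ins]
    _ = (α_ Y F.A X).inv ≫ (ρ_ (Y ≫ F.A)).inv ▷ X ≫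
          ((Y ≫ F.A) ◁ (F.one ≫ F.comul)) ▷ X ≫
          (α_ (Y ≫ F.A) F.A F.A).inv ▷ X ≫
          (α_ ((Y ≫ F.A) ≫ F.A) F.A X).hom ≫
          ((actY ▷ F.A ≫ actY) ▷ (F.A ≫ X)) ≫ Y ◁ actX := by
        bicategory
    _ = (α_ Y F.A X).inv ≫ (ρ_ (Y ≫ F.A)).inv ▷ X ≫
          ((Y ≫ F.A) ◁ (F.one ≫ F.comul)) ▷ X ≫
          (α_ (Y ≫ F.A) F.A F.A).inv ▷ X ≫
          (α_ ((Y ≫ F.A) ≫ F.A) F.A X).hom ≫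
          (((α_ Y F.A F.A).hom ≫ Y ◁ F.mul ≫ actY) ▷ (F.A ≫ X)) ≫ Y ◁ actX := by
        rw [hY1]
    _ = (α_ Y F.A X).inv ≫
          ((Y ◁ ((ρ_ F.A).inv ≫ F.A ◁ (F.one ≫ F.comul) ≫ (α_ F.A F.A F.A).inv ≫
            F.mul ▷ F.A)) ▷ X) ≫
          (α_ Y (F.A ≫ F.A) X).hom ≫ Y ◁ (α_ F.A F.A X).hom ≫
          (α_ Y F.A (F.A ≫ X)).inv ≫ actY ▷ (F.A ≫ X) ≫ Y ◁ actX := by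
        bicategory
    _ = (α_ Y F.A X).inv ≫ ((Y ◁ F.comul) ▷ X) ≫
          (α_ Y (F.A ≫ F.A) X).hom ≫ Y ◁ (α_ F.A F.A X).hom ≫
          (α_ Y F.A (F.A ≫ X)).inv ≫ actY ▷ (F.A ≫ X) ≫ Y ◁ actX := by rw [lemB]
    _ = midT F actX actY := by unfold midT; bicategory

lemma pi_absorb (actX : F.A ≫ X ⟶ X) (actY : Y ≫ F.A ⟶ Y)
    (hsep : F.comul ≫ F.mul = 𝟙 F.A)
    (hY1 : (α_ Y F.A F.A).hom ≫ Y ◁ F.mul ≫ actY = actY ▷ F.A ≫ actY)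
    (hY2 : (ρ_ Y).inv ≫ Y ◁ F.one ≫ actY = 𝟙 Y)
    {Z : c ⟶ b} (φ : Y ≫ X ⟶ Z)
    (hφ : lPair F actY ≫ φ = rPair F actX ≫ φ) :
    piT F actX actY ≫ φ = φ := by
  calc piT F actX actY ≫ φ
      = (ρ_ Y).inv ▷ X ≫ (Y ◁ (F.one ≫ F.comul)) ▷ X ≫ (α_ Y F.A F.A).inv ▷ X ≫
          (α_ (Y ≫ F.A) F.A X).hom ≫ actY ▷ (F.A ≫ X) ≫ (rPair F actX ≫ φ) := by
        unfold piT rPair; simp only [Category.assoc]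
    _ = (ρ_ Y).inv ▷ X ≫ (Y ◁ (F.one ≫ F.comul)) ▷ X ≫ (α_ Y F.A F.A).inv ▷ X ≫
          (α_ (Y ≫ F.A) F.A X).hom ≫ actY ▷ (F.A ≫ X) ≫ (lPair F actY ≫ φ) := by
        rw [← hφ]
    _ = (ρ_ Y).inv ▷ X ≫ (Y ◁ (F.one ≫ F.comul)) ▷ X ≫ (α_ Y F.A F.A).inv ▷ X ≫
          ((actY ▷ F.A ≫ actY) ▷ X) ≫ φ := by
        unfold lPair; bicategory
    _ = (ρ_ Y).inv ▷ X ≫ (Y ◁ (F.one ≫ F.comul)) ▷ X ≫ (α_ Y F.A F.A).inv ▷ X ≫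
          (((α_ Y F.A F.A).hom ≫ Y ◁ F.mul ≫ actY) ▷ X) ≫ φ := by
        rw [hY1]
    _ = ((ρ_ Y).inv ≫ Y ◁ (F.one ≫ (F.comul ≫ F.mul)) ≫ actY) ▷ X ≫ φ := by
        bicategory
    _ = ((ρ_ Y).inv ≫ Y ◁ F.one ≫ actY) ▷ X ≫ φ := by
        rw [hsep, Category.comp_id]
    _ = φ := by rw [hY2]; simp

end Aux

/-- If the canonical idempotent `π` splits through `T` via
`ϑ : X ⊗ Y → T` and `ξ : T → X ⊗ Y` with `ϑ ∘ ξ = 1_T` and `ξ ∘ ϑ = π`, then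
`ϑ` is a coequalizer of `(l, r)`: `ϑ ∘ l = ϑ ∘ r`, and for every
`φ : X ⊗ Y → Z` with `φ ∘ l = φ ∘ r` there is a unique `ζ : T → Z` with
`ζ ∘ ϑ = φ`. -/
theorem split_idempotent_is_coequalizer {a b c : C} (F : Frob a)
    (hsep : F.comul ≫ F.mul = 𝟙 F.A)
    {X : a ⟶ b} {Y : c ⟶ a} (actX : F.A ≫ X ⟶ X) (actY : Y ≫ F.A ⟶ Y)
    (hX : IsRightModule F X actX) (hY : IsLeftModule F Y actY)
    (T : c ⟶ b) (ϑ : Y ≫ X ⟶ T) (ξ : T ⟶ Y ≫ X)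
    (hsplit₁ : ξ ≫ ϑ = 𝟙 T) (hsplit₂ : ϑ ≫ ξ = piT F actX actY) :
    ((lPair F actY ≫ ϑ : Y ≫ F.A ≫ X ⟶ T) = rPair F actX ≫ ϑ) ∧
    (∀ (Z : c ⟶ b) (φ : Y ≫ X ⟶ Z),
      (lPair F actY ≫ φ : Y ≫ F.A ≫ X ⟶ Z) = rPair F actX ≫ φ →
        ∃! ζ : T ⟶ Z, ϑ ≫ ζ = φ) := by
  have hpar : lPair F actY ≫ piT F actX actY = rPair F actX ≫ piT F actX actY := by
    rw [subl F actX actY hY.1, subr F actX actY hX.1]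
  have hpi : piT F actX actY ≫ ϑ = ϑ := by
    rw [← hsplit₂, Category.assoc, hsplit₁, Category.comp_id]
  constructor
  · calc lPair F actY ≫ ϑ
        = lPair F actY ≫ piT F actX actY ≫ ϑ := by rw [hpi]
      _ = rPair F actX ≫ piT F actX actY ≫ ϑ := by
          rw [← Category.assoc, hpar, Category.assoc]
      _ = rPair F actX ≫ ϑ := by rw [hpi]
  · intro Z φ hφ
    refine ⟨ξ ≫ φ, ?_, ?_⟩
    · show ϑ ≫ ξ ≫ φ = φ
      rw [← Category.assoc, hsplit₂]
      exact pi_absorb F actX actY hsep hY.1 hY.2 φ hφ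
    · intro ζ hζ
      rw [← hζ, ← Category.assoc, hsplit₁, Category.id_comp]
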